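/- Let n, m, r be positive integers, L an n×r real matrix, F an m×r real matrix, e an n×m real matrix, and set W = L·Fᵀ + e. Then for every n×r real matrix U whose columns are orthonormal (UᵀU = I_r), one has ‖W‖_F² − tr(Uᵀ W Wᵀ U) ≥ ‖e‖_F² + 2·tr(L Fᵀ eᵀ) − r·‖e‖² − 2·√r·‖e‖·‖L Fᵀ‖_F. -/

import Mathlib

open Matrix

/-- Frobenius norm of a real matrix. -/
noncomputable def frobNorm {n m : ℕ} (A : Matrix (Fin n) (Fin m) ℝ) : ℝ :=
  Real.sqrt (∑ i, ∑ j, (A i j) ^ 2)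

/-- Spectral (ℓ²→ℓ² operator) norm of a real matrix. -/
noncomputable def specNorm {n m : ℕ} (A : Matrix (Fin n) (Fin m) ℝ) : ℝ :=
  ‖LinearMap.toContinuousLinearMap (Matrix.toEuclideanLin A)‖

/-! With `A = L Fᵀ`, the trace term is `‖Uᵀ W‖_F²`, and the mixed bound `‖B C‖_F ≤ ‖B‖ ‖C‖_F`
gives `‖Uᵀ A‖_F ≤ ‖A‖_F` (as `‖Uᵀ‖ ≤ 1`) and `‖Uᵀ e‖_F = ‖eᵀ U‖_F ≤ ‖e‖ ‖U‖_F = √r ‖e‖`.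
Hence `‖Uᵀ W‖_F ≤ ‖A‖_F + √r ‖e‖`; squaring this and expanding `‖A + e‖_F²` yields the claim. -/

variable {n m k : ℕ}

section Frobenius

open scoped Matrix.Norms.Frobenius

theorem frobNorm_eq_norm (A : Matrix (Fin n) (Fin m) ℝ) : frobNorm A = ‖A‖ := by
  rw [frobNorm, frobenius_norm_def, Real.sqrt_eq_rpow]
  simp [Real.norm_eq_abs, sq_abs]

theorem frobNorm_add_le (A B : Matrix (Fin n) (Fin m) ℝ) :
    frobNorm (A + B) ≤ frobNorm A + frobNorm B := by
  simpa only [frobNorm_eq_norm] using norm_add_le A B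

end Frobenius

theorem frobNorm_nonneg (A : Matrix (Fin n) (Fin m) ℝ) : 0 ≤ frobNorm A := Real.sqrt_nonneg _

theorem frobNorm_transpose (A : Matrix (Fin n) (Fin m) ℝ) : frobNorm Aᵀ = frobNorm A := by
  rw [frobNorm, frobNorm, Finset.sum_comm]
  rfl

theorem frobNorm_sq (A : Matrix (Fin n) (Fin m) ℝ) : frobNorm A ^ 2 = ∑ i, ∑ j, A i j ^ 2 :=
  Real.sq_sqrt (by positivity)

theorem frobNorm_sq_eq_trace (A : Matrix (Fin n) (Fin m) ℝ) :
    frobNorm A ^ 2 = trace (A * Aᵀ) := by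
  rw [frobNorm_sq]
  simp [trace, mul_apply, sq]

theorem frobNorm_sq_eq_sum_norm_col_sq (A : Matrix (Fin n) (Fin m) ℝ) :
    frobNorm A ^ 2 = ∑ j, ‖WithLp.toLp 2 (Aᵀ j)‖ ^ 2 := by
  rw [← frobNorm_transpose, frobNorm_sq]
  simp [EuclideanSpace.norm_sq_eq]

theorem frobNorm_add_sq (A B : Matrix (Fin n) (Fin m) ℝ) :
    frobNorm (A + B) ^ 2 = frobNorm A ^ 2 + 2 * trace (A * Bᵀ) + frobNorm B ^ 2 := by
  have hBA : trace (B * Aᵀ) = trace (A * Bᵀ) := by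
    rw [← trace_transpose, transpose_mul, transpose_transpose]
  simp only [frobNorm_sq_eq_trace, transpose_add, Matrix.add_mul, Matrix.mul_add, trace_add, hBA]
  ring

theorem frobNorm_of_transpose_mul_self_eq_one {U : Matrix (Fin n) (Fin k) ℝ} (hU : Uᵀ * U = 1) :
    frobNorm U = Real.sqrt k := by
  rw [← Real.sqrt_sq (frobNorm_nonneg U), frobNorm_sq_eq_trace, trace_mul_comm, hU,
    trace_one, Fintype.card_fin]

section L2Operator

open scoped Matrix.Norms.L2Operator

theorem specNorm_eq_norm (A : Matrix (Fin n) (Fin m) ℝ) : specNorm A = ‖A‖ := rfl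

theorem specNorm_transpose (A : Matrix (Fin n) (Fin m) ℝ) : specNorm Aᵀ = specNorm A := by
  simpa [specNorm_eq_norm] using l2_opNorm_conjTranspose A

theorem specNorm_le_one_of_transpose_mul_self_eq_one {U : Matrix (Fin n) (Fin k) ℝ}
    (hU : Uᵀ * U = 1) : specNorm U ≤ 1 := by
  have h := l2_opNorm_conjTranspose_mul_self U
  rw [conjTranspose_eq_transpose_of_trivial, hU] at h
  have h1 : ‖(1 : Matrix (Fin k) (Fin k) ℝ)‖ ≤ 1 := by
    rw [l2_opNorm_def]
    convert ContinuousLinearMap.norm_id_le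
    ext x i
    simp
  rw [specNorm_eq_norm]
  nlinarith [norm_nonneg U]

theorem norm_toLp_mulVec_le (A : Matrix (Fin n) (Fin m) ℝ) (x : Fin m → ℝ) :
    ‖WithLp.toLp 2 (A *ᵥ x)‖ ≤ specNorm A * ‖WithLp.toLp 2 x‖ :=
  l2_opNorm_mulVec A (WithLp.toLp 2 x)

end L2Operator

theorem frobNorm_mul_le_specNorm_mul (A : Matrix (Fin n) (Fin m) ℝ)
    (B : Matrix (Fin m) (Fin k) ℝ) :
    frobNorm (A * B) ≤ specNorm A * frobNorm B := by
  have hcol : ∀ j, (A * B)ᵀ j = A *ᵥ Bᵀ j := fun j => by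
    ext i; simp [mul_apply, mulVec, dotProduct]
  have hA : 0 ≤ specNorm A := norm_nonneg _
  refine (pow_le_pow_iff_left₀ (frobNorm_nonneg _) (mul_nonneg hA (frobNorm_nonneg _))
    two_ne_zero).mp ?_
  rw [mul_pow, frobNorm_sq_eq_sum_norm_col_sq, frobNorm_sq_eq_sum_norm_col_sq, Finset.mul_sum]
  refine Finset.sum_le_sum fun j _ => ?_
  rw [hcol, ← mul_pow]
  exact pow_le_pow_left₀ (norm_nonneg _) (norm_toLp_mulVec_le A _) 2

theorem stmt1_general (n m r : ℕ)
    (L : Matrix (Fin n) (Fin r) ℝ) (F : Matrix (Fin m) (Fin r) ℝ)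
    (e : Matrix (Fin n) (Fin m) ℝ) (W : Matrix (Fin n) (Fin m) ℝ)
    (hW : W = L * Fᵀ + e)
    (U : Matrix (Fin n) (Fin r) ℝ) (hU : Uᵀ * U = 1) :
    frobNorm W ^ 2 - Matrix.trace (Uᵀ * W * Wᵀ * U) ≥
      frobNorm e ^ 2 + 2 * Matrix.trace (L * Fᵀ * eᵀ)
        - (r : ℝ) * specNorm e ^ 2 - 2 * Real.sqrt r * specNorm e * frobNorm (L * Fᵀ) := by
  set A := L * Fᵀ
  have hUA : frobNorm (Uᵀ * A) ≤ frobNorm A := by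
    refine (frobNorm_mul_le_specNorm_mul _ _).trans (mul_le_of_le_one_left (frobNorm_nonneg A) ?_)
    rw [specNorm_transpose]
    exact specNorm_le_one_of_transpose_mul_self_eq_one hU
  have hUe : frobNorm (Uᵀ * e) ≤ Real.sqrt r * specNorm e := by
    rw [← frobNorm_transpose, transpose_mul, transpose_transpose, mul_comm,
      ← frobNorm_of_transpose_mul_self_eq_one hU, ← specNorm_transpose]
    exact frobNorm_mul_le_specNorm_mul _ _
  have hUW : frobNorm (Uᵀ * W) ≤ frobNorm A + Real.sqrt r * specNorm e := by
    rw [hW, Matrix.mul_add]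
    exact (frobNorm_add_le _ _).trans (add_le_add hUA hUe)
  have htrace : trace (Uᵀ * W * Wᵀ * U) = frobNorm (Uᵀ * W) ^ 2 := by
    rw [frobNorm_sq_eq_trace, transpose_mul, transpose_transpose, Matrix.mul_assoc]
  have hsq : frobNorm (Uᵀ * W) ^ 2 ≤
      frobNorm A ^ 2 + 2 * Real.sqrt r * specNorm e * frobNorm A + r * specNorm e ^ 2 := by
    calc frobNorm (Uᵀ * W) ^ 2 ≤ (frobNorm A + Real.sqrt r * specNorm e) ^ 2 :=
          pow_le_pow_left₀ (frobNorm_nonneg _) hUW 2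
      _ = _ := by rw [add_sq, mul_pow, Real.sq_sqrt r.cast_nonneg]; ring
  have hW2 : frobNorm W ^ 2 = frobNorm A ^ 2 + 2 * trace (A * eᵀ) + frobNorm e ^ 2 := by
    rw [hW, frobNorm_add_sq]
  rw [htrace, hW2, ge_iff_le]
  linarith

theorem stmt1 (n m r : ℕ) (hn : 0 < n) (hm : 0 < m) (hr : 0 < r)
    (L : Matrix (Fin n) (Fin r) ℝ) (F : Matrix (Fin m) (Fin r) ℝ)
    (e : Matrix (Fin n) (Fin m) ℝ) (W : Matrix (Fin n) (Fin m) ℝ)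
    (hW : W = L * Fᵀ + e)
    (U : Matrix (Fin n) (Fin r) ℝ) (hU : Uᵀ * U = 1) :
    frobNorm W ^ 2 - Matrix.trace (Uᵀ * W * Wᵀ * U) ≥
      frobNorm e ^ 2 + 2 * Matrix.trace (L * Fᵀ * eᵀ)
        - (r : ℝ) * specNorm e ^ 2 - 2 * Real.sqrt r * specNorm e * frobNorm (L * Fᵀ) :=
  stmt1_general n m r L F e W hW U hU
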